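/- Iterated graph-norm estimate (induction step of Lemma 4.1, abstract form): let A, G be operators on a common invariant dense domain D ⊆ H, and suppose (i) ‖A ξ‖ ≤ α‖G ξ‖ + β‖ξ‖ for all ξ ∈ D, and (ii) for every k ≥ 1 there is γ_k > 0 with ‖(G^k A − A G^k) ξ‖ ≤ γ_k ‖A^k ξ‖ for all ξ ∈ D. Then for every n ≥ 1 there exist constants α_n > 0 and β_{n,0},…,β_{n,n−1} ≥ 0 such that ‖A^n ξ‖ ≤ α_n ‖G^n ξ‖ + ∑_{k=0}^{n−1} β_{n,k} ‖G^k ξ‖ for all ξ ∈ D. -/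
import Mathlib


open BigOperators

/-- Iterated graph-norm estimate: from `‖Aξ‖ ≤ α‖Gξ‖ + β‖ξ‖` and commutator bounds
`‖[Gᵏ, A]ξ‖ ≤ γ_k ‖Aᵏξ‖`, deduce `‖Aⁿξ‖ ≤ αₙ‖Gⁿξ‖ + ∑_{k<n} β_{n,k}‖Gᵏξ‖`. -/
theorem stmt19 (E : Type*) [NormedAddCommGroup E] [NormedSpace ℂ E]
    (A G : E →ₗ[ℂ] E) (α β : ℝ) (hα : 0 < α)
    (h1 : ∀ ξ : E, ‖A ξ‖ ≤ α * ‖G ξ‖ + β * ‖ξ‖)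
    (h2 : ∀ k : ℕ, 1 ≤ k → ∃ γ : ℝ, 0 < γ ∧
      ∀ ξ : E, ‖(G ^ k * A - A * G ^ k) ξ‖ ≤ γ * ‖(A ^ k) ξ‖) :
    ∀ n : ℕ, 1 ≤ n → ∃ αn : ℝ, 0 < αn ∧ ∃ βn : Fin n → ℝ, (∀ k, 0 ≤ βn k) ∧
      ∀ ξ : E, ‖(A ^ n) ξ‖ ≤ αn * ‖(G ^ n) ξ‖ + ∑ k : Fin n, βn k * ‖(G ^ (k : ℕ)) ξ‖ := by
  have key : ∀ n : ℕ, 1 ≤ n → ∃ C : ℝ, 0 < C ∧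
      ∀ ξ : E, ‖(A ^ n) ξ‖ ≤ C * ∑ k ∈ Finset.range (n+1), ‖(G ^ k) ξ‖ := by
    intro n
    induction n using Nat.strong_induction_on with
    | _ n ih =>
      intro hn
      match n, hn with
      | 1, _ =>
        refine ⟨α + |β| + 1, by positivity, fun ξ => ?_⟩
        have h := h1 ξ
        have hb : β * ‖ξ‖ ≤ |β| * ‖ξ‖ :=
          mul_le_mul_of_nonneg_right (le_abs_self β) (norm_nonneg ξ)
        simp only [Finset.sum_range_succ, Finset.sum_range_zero, pow_one, pow_zero,
          Module.End.one_apply, zero_add]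
        have hg : 0 ≤ ‖G ξ‖ := norm_nonneg _
        have hx : 0 ≤ ‖ξ‖ := norm_nonneg _
        nlinarith [abs_nonneg β]
      | (m+2), _ =>
        obtain ⟨Cm, hCm, hIH⟩ := ih (m+1) (by omega) (by omega)
        have hγ : ∀ k, 1 ≤ k → ∃ γ : ℝ, 0 < γ ∧
            ∀ ξ : E, ‖(G ^ k * A - A * G ^ k) ξ‖ ≤ γ * ‖(A ^ k) ξ‖ := h2
        set γ : ℕ → ℝ := fun k => if h : 1 ≤ k then (hγ k h).choose else 1 with hγdef
        have hγs : ∀ k (hk : 1 ≤ k), 0 < γ k ∧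
            ∀ ξ : E, ‖(G ^ k * A - A * G ^ k) ξ‖ ≤ γ k * ‖(A ^ k) ξ‖ := by
          intro k hk
          simp only [hγdef, dif_pos hk]
          exact (hγ k hk).choose_spec
        set Cc : ℕ → ℝ := fun k =>
          if h : 1 ≤ k ∧ k < m + 2 then (ih k h.2 h.1).choose else 1 with hCcdef
        have hCcs : ∀ k (hk : 1 ≤ k) (hk2 : k < m + 2), 0 < Cc k ∧
            ∀ ξ : E, ‖(A ^ k) ξ‖ ≤ Cc k * ∑ j ∈ Finset.range (k+1), ‖(G ^ j) ξ‖ := by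
          intro k hk hk2
          simp only [hCcdef, dif_pos (⟨hk, hk2⟩ : 1 ≤ k ∧ k < m + 2)]
          exact (ih k hk2 hk).choose_spec
        set D : ℕ → ℝ := fun k => if k = 0 then Cc 1 else γ k * Cc k + α + |β| with hDdef
        have hDpos : ∀ k ∈ Finset.range (m+2), 0 < D k := by
          intro k hk
          simp only [Finset.mem_range] at hk
          by_cases h0 : k = 0
          · simp only [hDdef, if_pos h0]
            exact (hCcs 1 le_rfl (by omega)).1
          · have hk1 : 1 ≤ k := Nat.one_le_iff_ne_zero.mpr h0
            simp only [hDdef, if_neg h0]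
            have := (hγs k hk1).1
            have := (hCcs k hk1 hk).1
            have := abs_nonneg β
            nlinarith
        refine ⟨Cm * ∑ k ∈ Finset.range (m+2), D k, ?_, fun ξ => ?_⟩
        · exact mul_pos hCm (Finset.sum_pos hDpos ⟨0, by simp⟩)
        · set S : ℝ := ∑ j ∈ Finset.range (m+3), ‖(G ^ j) ξ‖ with hSdef
          have hterm : ∀ j ∈ Finset.range (m+3), (0:ℝ) ≤ ‖(G ^ j) ξ‖ :=
            fun j _ => norm_nonneg _
          have hS0 : 0 ≤ S := Finset.sum_nonneg hterm
          have hGle : ∀ j, j < m + 3 → ‖(G ^ j) ξ‖ ≤ S :=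
            fun j hj => Finset.single_le_sum hterm (Finset.mem_range.mpr hj)
          have hAk : ∀ k, 1 ≤ k → k < m + 2 → ‖(A ^ k) ξ‖ ≤ Cc k * S := by
            intro k hk1 hk2
            refine le_trans ((hCcs k hk1 hk2).2 ξ) ?_
            refine mul_le_mul_of_nonneg_left ?_ (le_of_lt (hCcs k hk1 hk2).1)
            refine Finset.sum_le_sum_of_subset_of_nonneg ?_ (fun j hj _ => norm_nonneg _)
            exact Finset.range_subset_range.mpr (by omega)
          have h2k : ∀ k ∈ Finset.range (m+2), ‖(G ^ k) (A ξ)‖ ≤ D k * S := by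
            intro k hk
            simp only [Finset.mem_range] at hk
            by_cases h0 : k = 0
            · subst h0
              simp only [hDdef, if_pos rfl, pow_zero, Module.End.one_apply]
              have := hAk 1 le_rfl (by omega)
              simpa [pow_one] using this
            · have hk1 : 1 ≤ k := Nat.one_le_iff_ne_zero.mpr h0
              have hsplit : (G ^ k) (A ξ) = (G ^ k * A - A * G ^ k) ξ + A ((G ^ k) ξ) := by
                simp only [LinearMap.sub_apply, Module.End.mul_apply]
                abel
              have htri : ‖(G ^ k) (A ξ)‖ ≤ ‖(G ^ k * A - A * G ^ k) ξ‖ + ‖A ((G ^ k) ξ)‖ := by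
                rw [hsplit]; exact norm_add_le _ _
              have hc : ‖(G ^ k * A - A * G ^ k) ξ‖ ≤ γ k * (Cc k * S) := by
                refine le_trans ((hγs k hk1).2 ξ) ?_
                exact mul_le_mul_of_nonneg_left (hAk k hk1 hk) (le_of_lt (hγs k hk1).1)
              have ha : ‖A ((G ^ k) ξ)‖ ≤ α * S + |β| * S := by
                have := h1 ((G ^ k) ξ)
                have hg1 : G ((G ^ k) ξ) = (G ^ (k+1)) ξ := by
                  rw [pow_succ']; rfl
                rw [hg1] at this
                have e1 : ‖(G ^ (k+1)) ξ‖ ≤ S := hGle (k+1) (by omega)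
                have e2 : ‖(G ^ k) ξ‖ ≤ S := hGle k (by omega)
                have hb : β * ‖(G ^ k) ξ‖ ≤ |β| * ‖(G ^ k) ξ‖ :=
                  mul_le_mul_of_nonneg_right (le_abs_self β) (norm_nonneg _)
                nlinarith [abs_nonneg β, norm_nonneg ((G ^ k) ξ)]
              simp only [hDdef, if_neg h0]
              calc ‖(G ^ k) (A ξ)‖ ≤ γ k * (Cc k * S) + (α * S + |β| * S) := by linarith
                _ = (γ k * Cc k + α + |β|) * S := by ring
          have hmain : ‖(A ^ (m+2)) ξ‖ ≤ Cm * ∑ k ∈ Finset.range (m+2), ‖(G ^ k) (A ξ)‖ := by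
            have hp : (A ^ (m+2)) ξ = (A ^ (m+1)) (A ξ) := by
              rw [pow_succ]; rfl
            rw [hp]
            exact hIH (A ξ)
          have hsum : ∑ k ∈ Finset.range (m+2), ‖(G ^ k) (A ξ)‖
              ≤ (∑ k ∈ Finset.range (m+2), D k) * S := by
            rw [Finset.sum_mul]
            exact Finset.sum_le_sum h2k
          calc ‖(A ^ (m+2)) ξ‖ ≤ Cm * ∑ k ∈ Finset.range (m+2), ‖(G ^ k) (A ξ)‖ := hmain
            _ ≤ Cm * ((∑ k ∈ Finset.range (m+2), D k) * S) :=
              mul_le_mul_of_nonneg_left hsum (le_of_lt hCm)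
            _ = Cm * (∑ k ∈ Finset.range (m+2), D k) * S := by ring
  intro n hn
  obtain ⟨C, hC, hb⟩ := key n hn
  refine ⟨C, hC, fun _ => C, fun _ => le_of_lt hC, fun ξ => ?_⟩
  have := hb ξ
  rw [Finset.sum_range_succ, mul_add] at this
  have heq : ∑ k : Fin n, C * ‖(G ^ (k : ℕ)) ξ‖
      = C * ∑ k ∈ Finset.range n, ‖(G ^ k) ξ‖ := by
    rw [Finset.mul_sum, ← Fin.sum_univ_eq_sum_range]
  linarith [this, heq.ge]
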